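/- arXiv:1710.11164 — 4 statements merged into one kernel-verified Lean document; each statement's English description precedes it below -/
import Mathlib

section
/- Let f : X → X be a continuous map of a metric space X. If there exists a point with dense orbit (point transitivity) and the set of minimal points is dense in X, then f is topologically transitive: for any two nonempty open sets U, V ⊆ X there exists n ∈ ℕ with f^n(U) ∩ V ≠ ∅. -/
def mapOrbit {X : Type*} (f : X → X) (x : X) : Set X :=
  Set.range fun n : ℕ => f^[n] x

/-- `x` is a minimal point for `f`. -/
def IsMinimalPoint {X : Type*} [MetricSpace X] (f : X → X) (x : X) : Prop :=
  IsCompact (closure (mapOrbit f x)) ∧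
    ∀ y ∈ closure (mapOrbit f x),
      closure (mapOrbit f y) = closure (mapOrbit f x)

theorem stmt_2 {X : Type*} [MetricSpace X]
    (f : X → X) (hf : Continuous f)
    (hPT : ∃ x : X, Dense (mapOrbit f x))
    (hM : Dense {x : X | IsMinimalPoint f x}) :
    ∀ U V : Set X, IsOpen U → IsOpen V → U.Nonempty → V.Nonempty →
      ∃ n : ℕ, ((f^[n] '' U) ∩ V).Nonempty := by
  obtain ⟨x, hx⟩ := hPT
  have key : ∀ k : ℕ, Dense (mapOrbit f (f^[k] x)) := by
    intro k
    by_contra hC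
    set C := closure (mapOrbit f (f^[k] x)) with hCdef
    have hCclosed : IsClosed C := isClosed_closure
    set F : Set X := (fun j => f^[j] x) '' (Set.Iio k) with hFdef
    have hFfin : F.Finite := (Set.finite_Iio k).image _
    have hcover : mapOrbit f x ⊆ F ∪ C := by
      rintro _ ⟨n, rfl⟩
      rcases lt_or_ge n k with h | h
      · exact Or.inl ⟨n, h, rfl⟩
      · obtain ⟨m, rfl⟩ := Nat.exists_eq_add_of_le h
        right
        apply subset_closure
        refine ⟨m, ?_⟩
        show f^[m] (f^[k] x) = f^[k + m] x
        rw [add_comm, Function.iterate_add_apply]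
    have hunion : (Set.univ : Set X) ⊆ F ∪ C := by
      rw [← hx.closure_eq]
      exact closure_minimal hcover (hFfin.isClosed.union hCclosed)
    have hcc : Cᶜ ⊆ F := fun p hp => by
      rcases hunion (Set.mem_univ p) with h | h
      · exact h
      · exact absurd h hp
    -- Cᶜ is nonempty
    obtain ⟨p, hp⟩ : (Cᶜ : Set X).Nonempty := by
      by_contra h
      push_neg at h
      rw [Set.compl_empty_iff] at h
      exact hC (by rw [dense_iff_closure_eq, ← hCdef, h])
    -- {p} is open
    have hopen : IsOpen ({p} : Set X) := by
      have h1 : Cᶜ \ {p} ⊆ F := fun q hq => hcc hq.1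
      have h2 : IsClosed (Cᶜ \ {p}) := (hFfin.subset h1).isClosed
      have h3 : IsOpen (Cᶜ ∩ (Cᶜ \ {p})ᶜ) := (hCclosed.isOpen_compl).inter h2.isOpen_compl
      have h4 : Cᶜ ∩ (Cᶜ \ {p})ᶜ = {p} := by
        ext q
        simp only [Set.mem_inter_iff, Set.mem_compl_iff, Set.mem_diff, Set.mem_singleton_iff]
        constructor
        · rintro ⟨hq1, hq2⟩
          by_contra hne
          exact hq2 ⟨hq1, hne⟩
        · rintro rfl
          exact ⟨hp, fun h => h.2 rfl⟩
      rwa [h4] at h3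
    -- p is a minimal point
    have hmin : IsMinimalPoint f p := by
      obtain ⟨q, hq, hq'⟩ := hM.exists_mem_open hopen ⟨p, rfl⟩
      rwa [Set.mem_singleton_iff.mp hq'] at hq
    -- p = f^[j] x with j < k
    obtain ⟨j, hj, hpj⟩ := hcc hp
    simp only [Set.mem_Iio] at hj
    -- f^[k] x belongs to the orbit of p
    have hpj' : f^[j] x = p := hpj
    have hq1 : f^[k] x ∈ mapOrbit f p := by
      refine ⟨k - j, ?_⟩
      show f^[k - j] p = f^[k] x
      rw [← hpj', ← Function.iterate_add_apply, Nat.sub_add_cancel hj.le]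
    have hq2 : f^[k] x ∈ closure (mapOrbit f p) := subset_closure hq1
    have hpc : p ∈ closure (mapOrbit f (f^[k] x)) := by
      rw [hmin.2 _ hq2]
      exact subset_closure ⟨0, rfl⟩
    rw [mem_closure_iff] at hpc
    obtain ⟨r, hr1, m, hm⟩ := hpc {p} hopen rfl
    apply hp
    apply subset_closure
    exact ⟨m, hm.trans (Set.mem_singleton_iff.mp hr1)⟩
  intro U V hU hV hUne hVne
  have hx0 : Dense (mapOrbit f (f^[0] x)) := key 0
  obtain ⟨u, hu, hu'⟩ := hx0.exists_mem_open hU hUne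
  obtain ⟨i, rfl⟩ := hu
  simp only [Function.iterate_zero_apply] at hu'
  obtain ⟨v, hv, hv'⟩ := (key i).exists_mem_open hV hVne
  obtain ⟨n, rfl⟩ := hv
  exact ⟨n, f^[n] (f^[i] x), ⟨f^[i] x, hu', rfl⟩, hv'⟩
end

section
/- Let f : X → X be a continuous map of a metric space X. Assume the set of transitive points (points with dense orbit) is dense in X, f is not minimal, and the set of minimal points is dense in X. Then f is sensitive: there exists ε > 0 such that for every x ∈ X and every δ > 0 there exist y with d(x,y) < δ and n ∈ ℕ with d(f^n(x), f^n(y)) > ε. -/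
open Metric Set

lemma orbit_mem_self {X : Type*} (f : X → X) (x : X) (n : ℕ) :
    f^[n] x ∈ mapOrbit f x := ⟨n, rfl⟩

/-- The key auxiliary lemma: if there is a minimal point `p` close to `x`, and a
point `q` all of whose iterates stay at distance `≥ 4ε` from `x`, then (using a
transitive point near `x`) we find a sensitivity witness. -/
lemma aux_sens {X : Type*} [MetricSpace X] (f : X → X) (hf : Continuous f)
    (hDPT : Dense {x : X | Dense (mapOrbit f x)})
    (ε δ : ℝ) (hε : 0 < ε) (hδ : 0 < δ) (x p q : X)
    (hp : IsMinimalPoint f p) (hdpδ : dist x p < δ) (hdpε : dist x p < ε / 4)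
    (hq : ∀ j : ℕ, 4 * ε ≤ dist x (f^[j] q)) :
    ∃ y : X, dist x y < δ ∧ ∃ n : ℕ, dist (f^[n] x) (f^[n] y) > ε := by
  classical
  set δ' : ℝ := min δ (ε / 4) with hδ'def
  have hδ' : 0 < δ' := lt_min hδ (by linarith)
  set P := closure (mapOrbit f p) with hP
  have hpP : p ∈ P := subset_closure (orbit_mem_self f p 0)
  -- syndetic-type return: there is n₀ such that every point of P enters ball p (ε/4)
  -- within n₀ steps
  obtain ⟨n₀, hn₀⟩ : ∃ n₀ : ℕ, ∀ y ∈ P, ∃ j ≤ n₀, dist (f^[j] y) p < ε / 4 := by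
    have hcov : P ⊆ ⋃ j : ℕ, f^[j] ⁻¹' (ball p (ε / 4)) := by
      intro y hy
      have hpcl : p ∈ closure (mapOrbit f y) := by
        rw [hp.2 y hy]; exact hpP
      rw [Metric.mem_closure_iff] at hpcl
      obtain ⟨z, ⟨m, rfl⟩, hz⟩ := hpcl (ε / 4) (by linarith)
      exact Set.mem_iUnion.2 ⟨m, by simpa [mem_ball, dist_comm] using hz⟩
    obtain ⟨s, hs⟩ := hp.1.elim_finite_subcover (fun j : ℕ => f^[j] ⁻¹' (ball p (ε / 4)))
      (fun j => isOpen_ball.preimage (hf.iterate j)) hcov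
    refine ⟨s.sup id, fun y hy => ?_⟩
    obtain ⟨j, hjs, hjy⟩ := Set.mem_iUnion₂.1 (hs hy)
    exact ⟨j, Finset.le_sup (f := id) hjs, by simpa [mem_ball] using hjy⟩
  -- neighborhood of q whose first n₀ iterates stay close to the orbit of q
  set W : Set X := ⋂ j ∈ Finset.range (n₀ + 1), f^[j] ⁻¹' (ball (f^[j] q) (ε / 4)) with hW
  have hWopen : IsOpen W := isOpen_biInter_finset
    (fun j _ => isOpen_ball.preimage (hf.iterate j))
  have hqW : q ∈ W := Set.mem_iInter₂.2 fun j _ => by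
    simp only [Set.mem_preimage, mem_ball, dist_self]
    linarith
  -- transitive point near x
  obtain ⟨t, ht, htx⟩ := hDPT.exists_mem_open isOpen_ball ⟨x, mem_ball_self hδ'⟩
  have htx' : dist x t < δ' := by rwa [mem_ball, dist_comm] at htx
  -- the orbit of t visits W
  obtain ⟨z, ⟨m, rfl⟩, hmW⟩ := ht.exists_mem_open hWopen ⟨q, hqW⟩
  -- apply the return bound to f^[m] p ∈ P
  obtain ⟨j, hjn₀, hjp⟩ := hn₀ (f^[m] p) (subset_closure (orbit_mem_self f p m))
  set k := j + m with hk
  have hkp : f^[k] p = f^[j] (f^[m] p) := Function.iterate_add_apply f j m p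
  have hkt : f^[k] t = f^[j] (f^[m] t) := Function.iterate_add_apply f j m t
  have hktq : dist (f^[k] t) (f^[j] q) < ε / 4 := by
    have := Set.mem_iInter₂.1 hmW j (Finset.mem_range.2 (Nat.lt_succ_of_le hjn₀))
    rw [hkt]; simpa [mem_ball] using this
  have hpk : dist p (f^[k] p) < ε / 4 := by rw [hkp, dist_comm]; exact hjp
  -- distance estimates
  have hA : dist x (f^[k] p) < ε / 2 := by
    have := dist_triangle x p (f^[k] p)
    linarith
  have hB : 4 * ε - ε / 4 < dist x (f^[k] t) := by
    have h1 := hq j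
    have h2 := dist_triangle x (f^[k] t) (f^[j] q)
    linarith
  have hT1 : dist x (f^[k] t) ≤ dist x (f^[k] p) + dist (f^[k] p) (f^[k] t) :=
    dist_triangle _ _ _
  have hT2 : dist (f^[k] p) (f^[k] t) ≤
      dist (f^[k] p) (f^[k] x) + dist (f^[k] x) (f^[k] t) := dist_triangle _ _ _
  rcases le_or_gt (dist (f^[k] x) (f^[k] p)) ε with h | h
  · refine ⟨t, lt_of_lt_of_le htx' (min_le_left _ _), k, ?_⟩
    have hcomm : dist (f^[k] p) (f^[k] x) = dist (f^[k] x) (f^[k] p) := dist_comm _ _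
    linarith
  · exact ⟨p, hdpδ, k, h⟩

theorem stmt_4 {X : Type*} [MetricSpace X]
    (f : X → X) (hf : Continuous f)
    (hDPT : Dense {x : X | Dense (mapOrbit f x)})
    (hnonmin : ¬ ∃ x : X, IsMinimalPoint f x ∧ Dense (mapOrbit f x))
    (hM : Dense {x : X | IsMinimalPoint f x}) :
    ∃ ε > 0, ∀ x : X, ∀ δ > 0, ∃ y : X, dist x y < δ ∧
      ∃ n : ℕ, dist (f^[n] x) (f^[n] y) > ε := by
  classical
  rcases isEmpty_or_nonempty X with hX | hX
  · exact ⟨1, one_pos, fun x => isEmptyElim x⟩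
  -- a minimal point
  obtain ⟨a, ha, -⟩ := hM.exists_mem_open isOpen_univ Set.univ_nonempty
  -- a minimal point with a different orbit closure
  obtain ⟨b, hb, hne⟩ : ∃ b, IsMinimalPoint f b ∧
      closure (mapOrbit f b) ≠ closure (mapOrbit f a) := by
    by_contra h
    push_neg at h
    refine hnonmin ⟨a, ha, ?_⟩
    have hsub : {x | IsMinimalPoint f x} ⊆ closure (mapOrbit f a) := fun x hx => by
      rw [← h x hx]; exact subset_closure (orbit_mem_self f x 0)
    have hd : Dense (closure (mapOrbit f a)) := hM.mono hsub
    rwa [dense_closure] at hd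
  set M := closure (mapOrbit f a) with hMdef
  set N := closure (mapOrbit f b) with hNdef
  have hMne : M.Nonempty := ⟨a, subset_closure (orbit_mem_self f a 0)⟩
  have hNne : N.Nonempty := ⟨b, subset_closure (orbit_mem_self f b 0)⟩
  -- M and N are disjoint
  have hdisj : ∀ z ∈ M, z ∉ N := fun z hzM hzN =>
    hne ((hb.2 z hzN).symm.trans (ha.2 z hzM))
  -- minimum of infDist · N over the compact set M is positive
  obtain ⟨a₀, ha₀M, ha₀min⟩ := ha.1.exists_isMinOn hMne (continuous_infDist_pt N).continuousOn
  have hδ₀ : 0 < infDist a₀ N :=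
    (isClosed_closure.notMem_iff_infDist_pos hNne).1 (hdisj a₀ ha₀M)
  set ε : ℝ := infDist a₀ N / 8 with hεdef
  have hε : 0 < ε := by positivity
  refine ⟨ε, hε, fun x δ hδ => ?_⟩
  set δ' : ℝ := min δ (ε / 4) with hδ'def
  have hδ' : 0 < δ' := lt_min hδ (by linarith)
  -- a minimal point p close to x
  obtain ⟨p, hp, hpx⟩ := hM.exists_mem_open isOpen_ball ⟨x, mem_ball_self hδ'⟩
  have hpx' : dist x p < δ' := by rwa [mem_ball, dist_comm] at hpx
  have hpδ : dist x p < δ := lt_of_lt_of_le hpx' (min_le_left _ _)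
  have hpε : dist x p < ε / 4 := lt_of_lt_of_le hpx' (min_le_right _ _)
  -- one of M, N is 4ε-far from x
  have hsum : 8 * ε ≤ infDist x M + infDist x N := by
    obtain ⟨am, hamM, ham⟩ := ha.1.exists_infDist_eq_dist hMne x
    obtain ⟨bn, hbnN, hbn⟩ := hb.1.exists_infDist_eq_dist hNne x
    have h1 : infDist a₀ N ≤ infDist am N := ha₀min hamM
    have h2 : infDist am N ≤ dist am bn := infDist_le_dist_of_mem hbnN
    have h3 : dist am bn ≤ dist am x + dist x bn := dist_triangle _ _ _
    have h4 : dist am x = dist x am := dist_comm _ _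
    have h5 : 8 * ε = infDist a₀ N := by rw [hεdef]; ring
    linarith [ham, hbn]
  rcases le_or_gt (4 * ε) (infDist x M) with hcase | hcase
  · -- M is far: use q = a
    exact aux_sens f hf hDPT ε δ hε hδ x p a hp hpδ hpε
      (fun j => le_trans hcase
        (infDist_le_dist_of_mem (subset_closure (orbit_mem_self f a j))))
  · -- N is far: use q = b
    have hN4 : 4 * ε ≤ infDist x N := by linarith
    exact aux_sens f hf hDPT ε δ hε hδ x p b hp hpδ hpε
      (fun j => le_trans hN4
        (infDist_le_dist_of_mem (subset_closure (orbit_mem_self f b j))))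
end

section
/- Let f : X → X be a continuous map of a Polish metric space X. If f is point transitive (some point has dense orbit), f is not minimal, and the set of minimal points is dense in X, then f is sensitive: there exists ε > 0 such that for all x ∈ X and δ > 0 there exist y ∈ B(x,δ) and n ∈ ℕ with d(f^n(x), f^n(y)) > ε. -/
/-!
Since `X` is not minimal, the dense set of minimal points meets the complement of some
minimal set `M₁`, so there is a second minimal set `M₂`, disjoint from `M₁`. By compactness
their `c`-thickenings are disjoint for some `c > 0`, so every `x` is `c`-far from `M₁` or
from `M₂`. Given `x` and `δ`, pick a minimal point `p` near `x` and a minimal set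
`M = closure (orbit q)` far from `x`. The returns of `p` to its own neighbourhood are
syndetic, with gaps at most `K`, and the transitive point provides `y` near `x` whose orbit
shadows `q, …, f^K q` from some time `k` on. At a time `n = k + j` with `j ≤ K` when `p` has
returned, `f^n p` is near `x` while `f^n y` is near `M`, so `f^n x` is far from one of them.
-/

open Metric Function

section

variable {X : Type*} (f : X → X)

theorem iterate_mem_mapOrbit (x : X) (n : ℕ) : f^[n] x ∈ mapOrbit f x := ⟨n, rfl⟩

theorem mapOrbit_iterate_subset (x : X) (i : ℕ) : mapOrbit f (f^[i] x) ⊆ mapOrbit f x := by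
  rintro _ ⟨n, rfl⟩
  exact ⟨n + i, iterate_add_apply f n i x⟩

theorem mapOrbit_subset_union (x : X) (N : ℕ) :
    mapOrbit f x ⊆ (fun i => f^[i] x) '' Set.Iio N ∪ mapOrbit f (f^[N] x) := by
  rintro _ ⟨n, rfl⟩
  rcases lt_or_ge n N with hn | hn
  · exact Or.inl ⟨n, hn, rfl⟩
  · refine Or.inr ⟨n - N, ?_⟩
    simp only [← iterate_add_apply, Nat.sub_add_cancel hn]

variable [MetricSpace X] {f}

namespace IsMinimalPoint

theorem mem_closure_mapOrbit {q z : X} (hq : IsMinimalPoint f q)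
    (hz : z ∈ closure (mapOrbit f q)) : q ∈ closure (mapOrbit f z) := by
  rw [hq.2 z hz]
  exact subset_closure (iterate_mem_mapOrbit f q 0)

theorem mem_closure_mapOrbit_iterate {q : X} (hq : IsMinimalPoint f q) (N : ℕ) :
    q ∈ closure (mapOrbit f (f^[N] q)) :=
  hq.mem_closure_mapOrbit (subset_closure (iterate_mem_mapOrbit f q N))

/-- If `q` lies in the omitted initial segment of the orbit, minimality brings it back into
the tail. -/
theorem mem_closure_mapOrbit_iterate_of_mem {q x : X} (hq : IsMinimalPoint f q)
    (hqx : q ∈ closure (mapOrbit f x)) (N : ℕ) : q ∈ closure (mapOrbit f (f^[N] x)) := by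
  have hfin : ((fun i => f^[i] x) '' Set.Iio N).Finite := (Set.finite_Iio N).image _
  have hq' := closure_mono (mapOrbit_subset_union f x N) hqx
  rw [closure_union, hfin.isClosed.closure_eq] at hq'
  rcases hq' with ⟨i, -, rfl⟩ | hq'
  · refine closure_mono ?_ (hq.mem_closure_mapOrbit_iterate N)
    rw [← iterate_add_apply, add_comm, iterate_add_apply]
    exact mapOrbit_iterate_subset f _ i
  · exact hq'

/-- Syndetic recurrence; the bound `K` comes from a finite subcover of the compact orbit
closure. -/
theorem exists_iterate_dist_lt (hf : Continuous f) {p : X} (hp : IsMinimalPoint f p)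
    {ε : ℝ} (hε : 0 < ε) :
    ∃ K : ℕ, ∀ z ∈ closure (mapOrbit f p), ∃ j ≤ K, dist (f^[j] z) p < ε := by
  have hcover : closure (mapOrbit f p) ⊆ ⋃ j : ℕ, f^[j] ⁻¹' ball p ε := by
    intro z hz
    obtain ⟨_, hw, j, rfl⟩ := mem_closure_iff.mp (hp.mem_closure_mapOrbit hz) (ball p ε)
      isOpen_ball (mem_ball_self hε)
    exact Set.mem_iUnion.mpr ⟨j, hw⟩
  obtain ⟨s, hs⟩ := hp.1.elim_finite_subcover _
    (fun j => isOpen_ball.preimage (hf.iterate j)) hcover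
  refine ⟨s.sup id, fun z hz => ?_⟩
  obtain ⟨j, hjs, hj⟩ := Set.mem_iUnion₂.mp (hs hz)
  exact ⟨j, Finset.le_sup (f := id) hjs, hj⟩

end IsMinimalPoint

theorem exists_pos_forall_exists_minimal_le_dist
    (hnonmin : ¬ ∀ x : X, Dense (mapOrbit f x)) (hM : Dense {x : X | IsMinimalPoint f x}) :
    ∃ c > 0, ∀ x : X, ∃ q, IsMinimalPoint f q ∧ ∀ j : ℕ, c ≤ dist x (f^[j] q) := by
  obtain ⟨x₀, -⟩ := not_forall.mp hnonmin
  have : Nonempty X := ⟨x₀⟩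
  obtain ⟨q₁, hq₁⟩ := hM.nonempty
  have hM₁ : (closure (mapOrbit f q₁))ᶜ.Nonempty := by
    refine Set.nonempty_compl.mpr fun h => hnonmin fun z => ?_
    rw [dense_iff_closure_eq, hq₁.2 z (h ▸ Set.mem_univ z), h]
  obtain ⟨q₂, hq₂, hq₂M₁⟩ := hM.exists_mem_open isClosed_closure.isOpen_compl hM₁
  have hdisj : Disjoint (closure (mapOrbit f q₁)) (closure (mapOrbit f q₂)) :=
    Set.disjoint_left.mpr fun z hz₁ hz₂ =>
      hq₂M₁ (hq₁.2 z hz₁ ▸ hq₂.mem_closure_mapOrbit hz₂)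
  obtain ⟨c, hc, hthick⟩ := hdisj.exists_thickenings hq₁.1 isClosed_closure
  have hfar : ∀ {x q : X}, x ∉ thickening c (closure (mapOrbit f q)) →
      ∀ j, c ≤ dist x (f^[j] q) := fun hx j =>
    not_lt.mp fun h => hx (mem_thickening_iff.mpr
      ⟨_, subset_closure (iterate_mem_mapOrbit f _ j), h⟩)
  refine ⟨c, hc, fun x => ?_⟩
  by_cases hx : x ∈ thickening c (closure (mapOrbit f q₁))
  · exact ⟨q₂, hq₂, hfar (Set.disjoint_left.mp hthick hx)⟩
  · exact ⟨q₁, hq₁, hfar hx⟩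

theorem exists_mem_ball_iterate_shadow (hf : Continuous f) {t q : X}
    (ht : Dense (mapOrbit f t)) (hq : IsMinimalPoint f q) (K : ℕ) {ε : ℝ} (hε : 0 < ε)
    (x : X) {δ : ℝ} (hδ : 0 < δ) :
    ∃ y ∈ ball x δ, ∃ k : ℕ, ∀ j ≤ K, dist (f^[j] (f^[k] y)) (f^[j] q) < ε := by
  set V := ⋂ j ∈ Set.Iic K, f^[j] ⁻¹' ball (f^[j] q) ε
  have hV : IsOpen V :=
    (Set.finite_Iic K).isOpen_biInter fun j _ => isOpen_ball.preimage (hf.iterate j)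
  have hqV : q ∈ V := Set.mem_iInter₂.mpr fun j _ => mem_ball_self hε
  obtain ⟨_, ⟨a, rfl⟩, hay⟩ := ht.exists_mem_open isOpen_ball (nonempty_ball.mpr hδ)
  obtain ⟨_, hkV, k, rfl⟩ := mem_closure_iff.mp
    (hq.mem_closure_mapOrbit_iterate_of_mem (ht q) a) V hV hqV
  exact ⟨_, hay, k, fun j hj => Set.mem_iInter₂.mp hkV j hj⟩

theorem exists_dist_iterate_gt_of_le_dist (hf : Continuous f) {t p q x : X} {ε δ : ℝ}
    (ht : Dense (mapOrbit f t)) (hp : IsMinimalPoint f p) (hq : IsMinimalPoint f q)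
    (hε : 0 < ε) (hδε : δ ≤ ε) (hpx : p ∈ ball x δ) (hxq : ∀ j, 7 * ε ≤ dist x (f^[j] q)) :
    ∃ y ∈ ball x δ, ∃ n : ℕ, 2 * ε < dist (f^[n] x) (f^[n] y) := by
  obtain ⟨K, hK⟩ := hp.exists_iterate_dist_lt hf hε
  obtain ⟨y, hy, k, hyq⟩ :=
    exists_mem_ball_iterate_shadow hf ht hq K hε x (pos_of_mem_ball hpx)
  obtain ⟨j, hjK, hpj⟩ := hK _ (subset_closure (iterate_mem_mapOrbit f p k))
  have hyj := hyq j hjK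
  rw [← iterate_add_apply] at hpj hyj
  set n := j + k
  by_contra! hsmall
  have hpn := hsmall p hpx n
  have hyn := hsmall y hy n
  rw [dist_comm] at hpn hpj
  have hchain : dist x (f^[j] q) ≤ dist x p + dist p (f^[n] p) + dist (f^[n] p) (f^[n] x)
      + dist (f^[n] x) (f^[n] y) + dist (f^[n] y) (f^[j] q) := by
    linarith [dist_triangle4 x p (f^[n] p) (f^[n] x),
      dist_triangle4 x (f^[n] x) (f^[n] y) (f^[j] q)]
  linarith [hxq j, mem_ball'.mp hpx]

end

theorem stmt_7_general {X : Type*} [MetricSpace X]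
    (f : X → X) (hf : Continuous f)
    (hPT : ∃ x : X, Dense (mapOrbit f x))
    (hnonmin : ¬ ∀ x : X, Dense (mapOrbit f x))
    (hM : Dense {x : X | IsMinimalPoint f x}) :
    ∃ ε > 0, ∀ x : X, ∀ δ > 0, ∃ y ∈ Metric.ball x δ,
      ∃ n : ℕ, dist (f^[n] x) (f^[n] y) > ε := by
  obtain ⟨t, ht⟩ := hPT
  obtain ⟨c, hc, hfar⟩ := exists_pos_forall_exists_minimal_le_dist hnonmin hM
  have hε : 0 < c / 7 := by positivity
  refine ⟨2 * (c / 7), by positivity, fun x δ hδ => ?_⟩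
  obtain ⟨q, hq, hxq⟩ := hfar x
  obtain ⟨p, hp, hpx⟩ :=
    hM.exists_mem_open isOpen_ball (nonempty_ball.mpr (lt_min hδ hε) : (ball x _).Nonempty)
  obtain ⟨y, hy, n, hn⟩ := exists_dist_iterate_gt_of_le_dist hf ht hp hq hε (min_le_right _ _)
    hpx fun j => by linarith [hxq j]
  exact ⟨y, ball_subset_ball (min_le_left _ _) hy, n, hn⟩

theorem stmt_7 {X : Type*} [MetricSpace X] [PolishSpace X]
    (f : X → X) (hf : Continuous f)
    (hPT : ∃ x : X, Dense (mapOrbit f x))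
    (hnonmin : ¬ ∀ x : X, Dense (mapOrbit f x))
    (hM : Dense {x : X | IsMinimalPoint f x}) :
    ∃ ε > 0, ∀ x : X, ∀ δ > 0, ∃ y ∈ Metric.ball x δ,
      ∃ n : ℕ, dist (f^[n] x) (f^[n] y) > ε :=
  stmt_7_general f hf hPT hnonmin hM
end

section
/- Let f : X → X be a continuous map of a metric space X that is almost open (the image under f of any nonempty open set has nonempty interior). Assume the set of transitive points is dense, f is non-minimal, and the set M⁻¹ = ⋃_{n≥0} f^{-n}(M) is dense, where M is the set of minimal points. Then f is sensitive. -/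
namespace Stmt8Aux

variable {X : Type*} [MetricSpace X]

set_option linter.unusedSectionVars false in
lemma mem_orbit (f : X → X) (x : X) (n : ℕ) : f^[n] x ∈ mapOrbit f x := ⟨n, rfl⟩

lemma orbit_mem_closure (f : X → X) (x : X) (n : ℕ) : f^[n] x ∈ closure (mapOrbit f x) :=
  subset_closure (mem_orbit f x n)

lemma syndetic {f : X → X} (hf : Continuous f) {q : X} (hq : IsMinimalPoint f q)
    {V : Set X} (hV : IsOpen V) (hVq : (V ∩ closure (mapOrbit f q)).Nonempty) :
    ∃ N : ℕ, ∀ y ∈ closure (mapOrbit f q), ∃ i ≤ N, f^[i] y ∈ V := by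
  obtain ⟨v, hvV, hvL⟩ := hVq
  have hcover : closure (mapOrbit f q) ⊆ ⋃ n : ℕ, f^[n] ⁻¹' V := by
    intro y hy
    have hv' : v ∈ closure (mapOrbit f y) := by rw [hq.2 y hy]; exact hvL
    obtain ⟨w, hwV, hworb⟩ := mem_closure_iff.mp hv' V hV hvV
    obtain ⟨n, rfl⟩ := hworb
    exact Set.mem_iUnion.mpr ⟨n, hwV⟩
  obtain ⟨t, ht⟩ := hq.1.elim_finite_subcover (fun n : ℕ => f^[n] ⁻¹' V)
      (fun n => hV.preimage (hf.iterate n)) hcover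
  refine ⟨t.sup id, fun y hy => ?_⟩
  obtain ⟨n, hnt, hnV⟩ := Set.mem_iUnion₂.mp (ht hy)
  exact ⟨n, Finset.le_sup (f := id) hnt, hnV⟩

lemma no_isolated {f : X → X}
    (hao : ∀ U : Set X, IsOpen U → U.Nonempty → (interior (f '' U)).Nonempty)
    (hDPT : Dense {x : X | Dense (mapOrbit f x)})
    (hnonmin : ¬ ∃ x : X, IsMinimalPoint f x ∧ Dense (mapOrbit f x))
    (hMinv : Dense (⋃ n : ℕ, f^[n] ⁻¹' {x : X | IsMinimalPoint f x}))
    (x : X) (hx : IsOpen ({x} : Set X)) : False := by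
  -- x is transitive
  obtain ⟨z, hz1, hz2⟩ := hDPT.exists_mem_open hx ⟨x, rfl⟩
  rw [Set.mem_singleton_iff] at hz2
  subst hz2
  have ht : Dense (mapOrbit f z) := hz1
  -- all iterates of z are isolated
  have hiter : ∀ i : ℕ, IsOpen ({f^[i] z} : Set X) := by
    intro i
    induction i with
    | zero => simpa using hx
    | succ i ih =>
      obtain ⟨w, hw⟩ := hao {f^[i] z} ih ⟨f^[i] z, rfl⟩
      rw [Set.image_singleton] at hw
      have hw' : w = f (f^[i] z) := Set.mem_singleton_iff.mp (interior_subset hw)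
      rw [hw'] at hw
      have hsub : interior ({f (f^[i] z)} : Set X) = {f (f^[i] z)} := by
        apply subset_antisymm interior_subset
        intro y hy
        rw [Set.mem_singleton_iff] at hy
        rw [hy]
        exact hw
      rw [Function.iterate_succ_apply', ← hsub]
      exact isOpen_interior
  -- some iterate of z is a minimal point
  obtain ⟨w, hw1, hw2⟩ := hMinv.exists_mem_open hx ⟨z, rfl⟩
  rw [Set.mem_singleton_iff] at hw2
  subst hw2
  obtain ⟨n₀, hn₀⟩ := Set.mem_iUnion.mp hw1
  have hp : IsMinimalPoint f (f^[n₀] w) := hn₀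
  set p := f^[n₀] w with hpdef
  have hpo : IsOpen ({p} : Set X) := hiter n₀
  -- p is periodic
  have hfp : f p ∈ closure (mapOrbit f p) := by
    have h1 : f p = f^[1] p := by simp
    rw [h1]; exact orbit_mem_closure f p 1
  have hpin : p ∈ closure (mapOrbit f (f p)) := by
    rw [hp.2 (f p) hfp]
    simpa using orbit_mem_closure f p 0
  obtain ⟨w', hw'1, hw'2⟩ := mem_closure_iff.mp hpin {p} hpo rfl
  rw [Set.mem_singleton_iff] at hw'1
  obtain ⟨j, hj⟩ := hw'2
  have hper : f^[j + 1] p = p := by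
    rw [Function.iterate_succ_apply]
    exact hj.trans hw'1
  set T := j + 1 with hTdef
  have hT : 0 < T := Nat.succ_pos j
  -- orbit of p reduces mod T
  have hred : ∀ n : ℕ, ∃ s, s < T ∧ f^[n] p = f^[s] p := by
    intro n
    induction n using Nat.strong_induction_on with
    | _ n ih =>
      rcases lt_or_ge n T with hlt | hge
      · exact ⟨n, hlt, rfl⟩
      · obtain ⟨m, rfl⟩ : ∃ m, n = m + T := ⟨n - T, (Nat.sub_add_cancel hge).symm⟩
        have heq : f^[m + T] p = f^[m] p := by
          rw [Function.iterate_add_apply, hper]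
        obtain ⟨s, hs, hs'⟩ := ih m (by omega)
        exact ⟨s, hs, by rw [heq, hs']⟩
  -- orbit of z is finite
  have horbfin : (mapOrbit f w).Finite := by
    apply Set.Finite.subset (Set.Finite.image (fun i => f^[i] w) (Set.finite_Iio (n₀ + T)))
    rintro _ ⟨n, rfl⟩
    rcases lt_or_ge n n₀ with hlt | hge
    · exact ⟨n, by simpa using lt_of_lt_of_le hlt (Nat.le_add_right _ _), rfl⟩
    · obtain ⟨m, rfl⟩ : ∃ m, n = m + n₀ := ⟨n - n₀, (Nat.sub_add_cancel hge).symm⟩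
      have h1 : f^[m + n₀] w = f^[m] p := Function.iterate_add_apply f m n₀ w
      obtain ⟨s, hs, hs2⟩ := hred m
      refine ⟨s + n₀, by simpa using by omega, ?_⟩
      show f^[s + n₀] w = f^[m + n₀] w
      rw [h1, hs2, Function.iterate_add_apply f s n₀ w]
  -- the whole space is finite
  have huniv : (Set.univ : Set X).Finite := by
    have h1 : closure (mapOrbit f w) = Set.univ := ht.closure_eq
    rw [← h1, horbfin.isClosed.closure_eq]
    exact horbfin
  -- every singleton is open
  have hall : ∀ y : X, IsOpen ({y} : Set X) := by
    intro y
    have h1 : IsClosed ({y}ᶜ : Set X) := (huniv.subset (Set.subset_univ _)).isClosed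
    simpa using h1.isOpen_compl
  -- every point is transitive
  have htrans : ∀ y : X, Dense (mapOrbit f y) := by
    intro y
    obtain ⟨z', hz'1, hz'2⟩ := hDPT.exists_mem_open (hall y) ⟨y, rfl⟩
    rw [Set.mem_singleton_iff] at hz'2
    subst hz'2
    exact hz'1
  -- p is a minimal point with dense orbit: contradiction
  apply hnonmin
  refine ⟨p, ⟨?_, ?_⟩, htrans p⟩
  · rw [(htrans p).closure_eq]
    exact huniv.isCompact
  · intro y _
    rw [(htrans y).closure_eq, (htrans p).closure_eq]

lemma late_visit (hiso : ∀ x : X, ¬ IsOpen ({x} : Set X)) {f : X → X} {v : X}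
    (hv : Dense (mapOrbit f v)) {A : Set X} (hA : IsOpen A) (hAne : A.Nonempty) (b : ℕ) :
    ∃ n, b ≤ n ∧ f^[n] v ∈ A := by
  classical
  set F : Set X := (fun i => f^[i] v) '' Set.Iio b with hFdef
  have hFfin : F.Finite := (Set.finite_Iio b).image _
  by_cases hsub : A ⊆ F
  · exfalso
    obtain ⟨a, ha⟩ := hAne
    have hfin2 : (F \ {a}).Finite := hFfin.subset Set.diff_subset
    have hopen : IsOpen (A \ (F \ {a})) := hA.sdiff hfin2.isClosed
    have heq : A \ (F \ {a}) = {a} := by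
      apply subset_antisymm
      · rintro y ⟨hyA, hyn⟩
        by_contra hne
        exact hyn ⟨hsub hyA, hne⟩
      · rintro y hy
        rw [Set.mem_singleton_iff] at hy
        subst hy
        exact ⟨ha, fun h => h.2 rfl⟩
    exact hiso a (heq ▸ hopen)
  · rw [Set.not_subset] at hsub
    obtain ⟨α, hαA, hαF⟩ := hsub
    have hopen : IsOpen (A \ F) := hA.sdiff hFfin.isClosed
    obtain ⟨w, hworb, hwAF⟩ := hv.exists_mem_open hopen ⟨α, hαA, hαF⟩
    obtain ⟨n, rfl⟩ := hworb
    refine ⟨n, ?_, hwAF.1⟩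
    by_contra hlt
    push_neg at hlt
    exact hwAF.2 ⟨n, hlt, rfl⟩

end Stmt8Aux

open Stmt8Aux in
theorem stmt_8 {X : Type*} [MetricSpace X]
    (f : X → X) (hf : Continuous f)
    (hao : ∀ U : Set X, IsOpen U → U.Nonempty → (interior (f '' U)).Nonempty)
    (hDPT : Dense {x : X | Dense (mapOrbit f x)})
    (hnonmin : ¬ ∃ x : X, IsMinimalPoint f x ∧ Dense (mapOrbit f x))
    (hMinv : Dense (⋃ n : ℕ, f^[n] ⁻¹' {x : X | IsMinimalPoint f x})) :
    ∃ ε > 0, ∀ x : X, ∀ δ > 0, ∃ y ∈ Metric.ball x δ,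
      ∃ n : ℕ, dist (f^[n] x) (f^[n] y) > ε := by
  classical
  rcases isEmpty_or_nonempty X with hX | hX
  · exact ⟨1, one_pos, fun x => isEmptyElim x⟩
  have hiso : ∀ x : X, ¬ IsOpen ({x} : Set X) :=
    fun x hx => no_isolated hao hDPT hnonmin hMinv x hx
  -- fix a minimal point p₀ and its (proper) minimal set K
  obtain ⟨w₀, hw₀⟩ := hMinv.nonempty
  obtain ⟨m₀, hm₀⟩ := Set.mem_iUnion.mp hw₀
  set p₀ := f^[m₀] w₀ with hp₀def
  have hp₀ : IsMinimalPoint f p₀ := hm₀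
  set K := closure (mapOrbit f p₀) with hKdef
  have hKne : K.Nonempty := ⟨p₀, by simpa using orbit_mem_closure f p₀ 0⟩
  have hx₀ : ∃ x₀, x₀ ∉ K := by
    by_contra hc
    push_neg at hc
    apply hnonmin
    refine ⟨p₀, hp₀, ?_⟩
    rw [dense_iff_closure_eq]
    exact Set.eq_univ_iff_forall.mpr hc
  obtain ⟨x₀, hx₀K⟩ := hx₀
  set r := Metric.infDist x₀ K with hrdef
  have hr : 0 < r := (isClosed_closure.notMem_iff_infDist_pos hKne).mp hx₀K
  set ε := r / 16 with hεdef
  have hε : 0 < ε := by positivity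
  refine ⟨ε, hε, ?_⟩
  intro x δ hδ
  -- pre-minimal point u and transitive point v in the ball
  obtain ⟨u, hu1, hu2⟩ := hMinv.exists_mem_open Metric.isOpen_ball ⟨x, Metric.mem_ball_self hδ⟩
  obtain ⟨b, hb⟩ := Set.mem_iUnion.mp hu1
  set q := f^[b] u with hqdef
  have hq : IsMinimalPoint f q := hb
  set L := closure (mapOrbit f q) with hLdef
  obtain ⟨v, hv1, hv2⟩ := hDPT.exists_mem_open Metric.isOpen_ball ⟨x, Metric.mem_ball_self hδ⟩
  have hv : Dense (mapOrbit f v) := hv1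
  have huL : ∀ n, b ≤ n → f^[n] u ∈ L := by
    intro n hn
    have h1 : f^[n] u = f^[n - b] q := by
      rw [hqdef, ← Function.iterate_add_apply, Nat.sub_add_cancel hn]
    rw [h1]
    exact orbit_mem_closure f q _
  have key : ∃ n : ℕ, 2 * ε < dist (f^[n] u) (f^[n] v) := by
    by_cases hcase : ∃ y ∈ L, 8 * ε < Metric.infDist y K
    · -- L reaches far from K
      obtain ⟨y, hyL, hy8⟩ := hcase
      obtain ⟨q', hq'orb, hq'd⟩ := Metric.mem_closure_iff.mp hyL ε hε
      have hq'L : q' ∈ L := subset_closure hq'orb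
      have hq'K : 7 * ε < Metric.infDist q' K := by
        have h1 := Metric.infDist_le_infDist_add_dist (x := y) (y := q') (s := K)
        linarith
      obtain ⟨N, hN⟩ := syndetic hf hq Metric.isOpen_ball ⟨q', Metric.mem_ball_self hε, hq'L⟩
      set KB := {z : X | Metric.infDist z K < ε} with hKBdef
      have hKBopen : IsOpen KB :=
        isOpen_lt (Metric.continuous_infDist_pt K) continuous_const
      set W := ⋂ i ∈ Finset.range (N + 1), f^[i] ⁻¹' KB with hWdef
      have hWopen : IsOpen W :=
        isOpen_biInter_finset fun i _ => hKBopen.preimage (hf.iterate i)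
      have hWne : W.Nonempty := by
        refine ⟨p₀, ?_⟩
        rw [hWdef]
        simp only [Set.mem_iInter, Set.mem_preimage]
        intro i _
        show Metric.infDist (f^[i] p₀) K < ε
        rw [Metric.infDist_zero_of_mem (orbit_mem_closure f p₀ i)]
        exact hε
      obtain ⟨n₁, hn₁b, hn₁W⟩ := late_visit hiso hv hWopen hWne b
      have hy₁ : f^[n₁] u ∈ L := huL n₁ hn₁b
      obtain ⟨i, hiN, hiV⟩ := hN _ hy₁
      refine ⟨i + n₁, ?_⟩
      have hu' : dist (f^[i + n₁] u) q' < ε := by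
        have h1 : f^[i + n₁] u = f^[i] (f^[n₁] u) := Function.iterate_add_apply f i n₁ u
        rw [h1]
        exact Metric.mem_ball.mp hiV
      have hv' : Metric.infDist (f^[i + n₁] v) K < ε := by
        rw [hWdef] at hn₁W
        simp only [Set.mem_iInter, Set.mem_preimage] at hn₁W
        have h2 := hn₁W i (Finset.mem_range.mpr (Nat.lt_succ_of_le hiN))
        have h1 : f^[i + n₁] v = f^[i] (f^[n₁] v) := Function.iterate_add_apply f i n₁ v
        rw [h1]
        exact h2
      have h2 : 6 * ε < Metric.infDist (f^[i + n₁] u) K := by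
        have h3 := Metric.infDist_le_infDist_add_dist (x := q') (y := f^[i + n₁] u) (s := K)
        have h4 : dist q' (f^[i + n₁] u) < ε := by rw [dist_comm]; exact hu'
        linarith
      have h5 := Metric.infDist_le_infDist_add_dist
        (x := f^[i + n₁] u) (y := f^[i + n₁] v) (s := K)
      have h6 : dist (f^[i + n₁] u) (f^[i + n₁] v) = dist (f^[i + n₁] v) (f^[i + n₁] u) :=
        dist_comm _ _
      linarith
    · -- L stays near K : x₀ is far from L
      push_neg at hcase
      have hfar : ∀ y ∈ L, 8 * ε ≤ dist x₀ y := by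
        intro y hyL
        have h1 := Metric.infDist_le_infDist_add_dist (x := x₀) (y := y) (s := K)
        have h2 := hcase y hyL
        have h3 : r = 16 * ε := by rw [hεdef]; ring
        linarith
      obtain ⟨n, hnb, hnball⟩ :=
        late_visit hiso hv Metric.isOpen_ball ⟨x₀, Metric.mem_ball_self hε⟩ b
      refine ⟨n, ?_⟩
      have h1 : dist (f^[n] v) x₀ < ε := Metric.mem_ball.mp hnball
      have h2 : 8 * ε ≤ dist x₀ (f^[n] u) := hfar _ (huL n hnb)
      have h3 := dist_triangle x₀ (f^[n] v) (f^[n] u)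
      have h4 : dist x₀ (f^[n] v) = dist (f^[n] v) x₀ := dist_comm _ _
      have h5 : dist (f^[n] u) (f^[n] v) = dist (f^[n] v) (f^[n] u) := dist_comm _ _
      linarith
  obtain ⟨n, hn⟩ := key
  have htri := dist_triangle (f^[n] u) (f^[n] x) (f^[n] v)
  rcases le_or_gt (dist (f^[n] x) (f^[n] u)) ε with hcu | hcu
  · refine ⟨v, hv2, n, ?_⟩
    have h1 : dist (f^[n] u) (f^[n] x) = dist (f^[n] x) (f^[n] u) := dist_comm _ _
    linarith
  · exact ⟨u, hu2, n, hcu⟩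
end
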